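/- With notation as in the Heisenberg representation r : H(k) → GL_m(Q(ζ)) (k, m, ℓ = k/m coprime to m, ζ a primitive k-th root of unity, p the smallest prime factor of k), for every g in the set S = {X} ∪ {YX^s : 0 ≤ s ≤ p−2}, the matrix r(g) − I is invertible. -/

import Mathlib

/-!
`r(X) - 1` is diagonal with entries `ζ^(iℓ+1) - 1`, nonzero because `ℓ ∤ iℓ + 1` and the
order of `ζ` is a multiple of `ℓ`. `r(Y X^s)` is a weighted cyclic shift: a fixed vector is
determined by its first coordinate `v₀`, and going once around the cycle multiplies `v₀` by
`ζ^t` with `t = m(s+1) + ℓ · s · (0 + 1 + ⋯ + (m-1))`. Since `gcd(m, ℓ) = 1` and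
`s + 1 < p ≤ ℓ`, `ℓ ∤ t`, so `ζ^t ≠ 1` and `v₀ = 0`.
-/

open Finset Matrix

section CyclicShift

variable {K : Type*} [Field K]

/-- The cyclic shift `e_j ↦ e_{j+1}` of `Kⁿ`, except that `e_{n-1} ↦ c • e_0`. -/
def cyclicShift (n : ℕ) (c : K) : Matrix (Fin n) (Fin n) K :=
  Matrix.of fun i j : Fin n =>
    if i.val = j.val + 1 then 1 else if i.val = 0 ∧ j.val = n - 1 then c else 0

lemma cyclicShift_mulVec_succ {n : ℕ} (c : K) (v : Fin n → K) (i : ℕ) (hi : i + 1 < n) :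
    (cyclicShift n c *ᵥ v) ⟨i + 1, hi⟩ = v ⟨i, by omega⟩ := by
  rw [mulVec, dotProduct, sum_eq_single ⟨i, by omega⟩]
  · simp [cyclicShift]
  · intro j _ hj
    have hj' : j.val ≠ i := fun h => hj (Fin.ext h)
    simp [cyclicShift, Ne.symm hj']
  · simp

lemma cyclicShift_mulVec_zero {n : ℕ} (c : K) (v : Fin n → K) (hn : 0 < n) :
    (cyclicShift n c *ᵥ v) ⟨0, hn⟩ = c * v ⟨n - 1, by omega⟩ := by
  rw [mulVec, dotProduct, sum_eq_single ⟨n - 1, by omega⟩]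
  · simp [cyclicShift]
  · intro j _ hj
    have hj' : j.val ≠ n - 1 := fun h => hj (Fin.ext h)
    simp [cyclicShift, hj']
  · simp

lemma eq_zero_of_cyclicShift_mulVec_mul_eq_self {n : ℕ} {c : K} {d : ℕ → K}
    (hcd : c * ∏ i ∈ range n, d i ≠ 1) {v : Fin n → K}
    (hv : cyclicShift n c *ᵥ (fun i => d i * v i) = v) : v = 0 := by
  rcases Nat.eq_zero_or_pos n with rfl | hn
  · exact funext fun i => i.elim0
  have hchain : ∀ i (hi : i < n), v ⟨i, hi⟩ = (∏ j ∈ range i, d j) * v ⟨0, hn⟩ := by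
    intro i hi
    induction i with
    | zero => simp
    | succ i ih =>
      have hstep := congrFun hv ⟨i + 1, hi⟩
      rw [cyclicShift_mulVec_succ] at hstep
      rw [← hstep, ih (by omega), prod_range_succ]
      ring
  have hwrap : v ⟨0, hn⟩ = (c * ∏ i ∈ range n, d i) * v ⟨0, hn⟩ := by
    have hstep := congrFun hv ⟨0, hn⟩
    rw [cyclicShift_mulVec_zero _ _ hn, hchain (n - 1) (by omega)] at hstep
    have hprod : ∏ i ∈ range n, d i = (∏ i ∈ range (n - 1), d i) * d (n - 1) := by
      rw [← prod_range_succ, Nat.sub_add_cancel hn]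
    calc v ⟨0, hn⟩ = c * (d (n - 1) * ((∏ i ∈ range (n - 1), d i) * v ⟨0, hn⟩)) :=
          hstep.symm
      _ = (c * ∏ i ∈ range n, d i) * v ⟨0, hn⟩ := by rw [hprod]; ring
  have hv0 : v ⟨0, hn⟩ = 0 := by
    have : (c * ∏ i ∈ range n, d i - 1) * v ⟨0, hn⟩ = 0 := by rw [sub_mul, ← hwrap]; ring
    exact (mul_eq_zero.mp this).resolve_left (sub_ne_zero.mpr hcd)
  funext i
  rw [hchain i.val i.isLt, hv0, mul_zero, Pi.zero_apply]

lemma isUnit_cyclicShift_mul_diagonal_sub_one {n : ℕ} {c : K} {d : ℕ → K}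
    (hcd : c * ∏ i ∈ range n, d i ≠ 1) :
    IsUnit (cyclicShift n c * diagonal (fun i : Fin n => d i) - 1) := by
  rw [isUnit_iff_isUnit_det, isUnit_iff_ne_zero, Ne, ← exists_mulVec_eq_zero_iff]
  rintro ⟨v, hv0, hv⟩
  rw [sub_mulVec, one_mulVec, sub_eq_zero, ← mulVec_mulVec,
    show diagonal (fun i : Fin n => d i) *ᵥ v = fun i : Fin n => d i * v i from
      funext fun i => mulVec_diagonal _ _ i] at hv
  exact hv0 (eq_zero_of_cyclicShift_mulVec_mul_eq_self hcd hv)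

end CyclicShift

lemma IsPrimitiveRoot.pow_ne_one_of_not_dvd {K : Type*} [CommMonoid K] {ζ : K} {k ℓ n : ℕ}
    (hζ : IsPrimitiveRoot ζ k) (hℓ : ℓ ∣ k) (hn : ¬ ℓ ∣ n) : ζ ^ n ≠ 1 :=
  fun h => hn (hℓ.trans ((hζ.pow_eq_one_iff_dvd n).mp h))

lemma not_dvd_add_sum_mul {m ℓ s : ℕ} (hcop : Nat.Coprime m ℓ) (hs : s + 1 < ℓ) :
    ¬ ℓ ∣ m + ∑ j ∈ range m, (j * ℓ + 1) * s := by
  have hsplit : m + ∑ j ∈ range m, (j * ℓ + 1) * s =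
      m * (s + 1) + ℓ * (s * ∑ j ∈ range m, j) := by
    simp only [add_mul, sum_add_distrib, sum_const, card_range, smul_eq_mul, ← sum_mul]
    ring
  rw [hsplit, Nat.dvd_add_left (dvd_mul_right _ _)]
  intro h
  have := Nat.le_of_dvd (by omega) (hcop.symm.dvd_of_dvd_mul_left h)
  omega

theorem heisenberg_rep_no_fixed_vector_general (k m : ℕ) (hmk : m < k) (hdvd : m ∣ k)
    (hcop : Nat.Coprime m (k / m)) (K : Type*) [Field K] (ζ : K)
    (hζ : IsPrimitiveRoot ζ k) (p : ℕ) (hp : p = k.minFac) :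
    letI ℓ : ℕ := k / m
    letI rX : Matrix (Fin m) (Fin m) K :=
      Matrix.diagonal fun i : Fin m => ζ ^ (i.val * ℓ + 1)
    letI rY : Matrix (Fin m) (Fin m) K :=
      Matrix.of fun i j : Fin m =>
        if i.val = j.val + 1 then 1 else if i.val = 0 ∧ j.val = m - 1 then ζ ^ m else 0
    IsUnit (rX - 1) ∧ ∀ s : ℕ, s ≤ p - 2 → IsUnit (rY * rX ^ s - 1) := by
  set ℓ := k / m
  have hℓk : ℓ ∣ k := Nat.div_dvd_of_dvd hdvd
  have hℓ : 2 ≤ ℓ := by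
    have hk : ℓ * m = k := Nat.div_mul_cancel hdvd
    by_contra! h
    nlinarith
  refine ⟨?_, fun s hs => ?_⟩
  · rw [← diagonal_one, diagonal_sub, isUnit_diagonal, Pi.isUnit_iff]
    refine fun i => (sub_ne_zero.mpr (hζ.pow_ne_one_of_not_dvd hℓk ?_)).isUnit
    rw [Nat.dvd_add_right (dvd_mul_left ℓ i.val), Nat.dvd_one]
    omega
  · have hpℓ : p ≤ ℓ := hp ▸ Nat.minFac_le_of_dvd hℓ hℓk
    have ht := hζ.pow_ne_one_of_not_dvd hℓk (not_dvd_add_sum_mul hcop (by omega : s + 1 < ℓ))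
    have hXs : (fun i : Fin m => ζ ^ (i.val * ℓ + 1)) ^ s =
        fun i => ζ ^ ((i.val * ℓ + 1) * s) :=
      funext fun i => by simp [pow_mul]
    rw [diagonal_pow, hXs]
    exact isUnit_cyclicShift_mul_diagonal_sub_one (c := ζ ^ m)
      (d := fun j => ζ ^ ((j * ℓ + 1) * s))
      (by rwa [prod_pow_eq_pow_sum, ← pow_add])

/-- With the Heisenberg representation `r : H(k) → GL_m(ℚ(ζ))` (where `m ∣ k`,
`1 < m < k`, `gcd(m, k/m) = 1`, `ℓ = k/m`, `ζ` a primitive `k`-th root of unity, and `p`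
the smallest prime factor of `k`): for every `g` in the set
`S = {X} ∪ {Y X^s : 0 ≤ s ≤ p−2}`, the matrix `r(g) − I` is invertible. -/
theorem heisenberg_rep_no_fixed_vector (k m : ℕ) (hm : 1 < m) (hmk : m < k) (hdvd : m ∣ k)
    (hcop : Nat.Coprime m (k / m)) (K : Type*) [Field K] (ζ : K)
    (hζ : IsPrimitiveRoot ζ k) (p : ℕ) (hp : p = k.minFac) :
    letI ℓ : ℕ := k / m
    letI rX : Matrix (Fin m) (Fin m) K :=
      Matrix.diagonal fun i : Fin m => ζ ^ (i.val * ℓ + 1)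
    letI rY : Matrix (Fin m) (Fin m) K :=
      Matrix.of fun i j : Fin m =>
        if i.val = j.val + 1 then 1 else if i.val = 0 ∧ j.val = m - 1 then ζ ^ m else 0
    IsUnit (rX - 1) ∧ ∀ s : ℕ, s ≤ p - 2 → IsUnit (rY * rX ^ s - 1) :=
  heisenberg_rep_no_fixed_vector_general k m hmk hdvd hcop K ζ hζ p hp
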